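/- There is a constant C > 0 such that for every triple of signs (μ₁,μ₂,μ₃) ∈ {(+,+,+), (+,-,-), (-,-,-)} and all ξ₁,ξ₂,ξ₃ ∈ ℝ, |Φ_{μ₁μ₂μ₃}(ξ₁,ξ₂,ξ₃)|⁻¹ ≤ C(1 + min{|ξ₁+ξ₂+ξ₃|, |ξ₁|, |ξ₂|, |ξ₃|}), where Φ_{μ₁μ₂μ₃}(ξ₁,ξ₂,ξ₃) = -Λ(ξ₁+ξ₂+ξ₃) + μ₁Λ(ξ₁) + μ₂Λ(ξ₂) + μ₃Λ(ξ₃) and Λ(ξ)=√(1+ξ²). -/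

import Mathlib

/-!
Write `Λ(ξ) = ‖1 + iξ‖`, so that the triangle inequality in `ℂ` does all the work. For the sign
pattern `(+,+,+)` it gives `Λ(ξ₁ + ξ₂ + ξ₃) ≤ |ξ₁| + Λ(ξ₂) + Λ(ξ₃)`, hence
`Φ ≥ Λ(ξ₁) - |ξ₁| ≳ (1 + |ξ₁|)⁻¹`, and likewise for `ξ₂`, `ξ₃`; it also gives
`Λ(ξ₁) + Λ(ξ₂) + Λ(ξ₃) ≥ ‖3 + i(ξ₁ + ξ₂ + ξ₃)‖`, hence `Φ ≳ (1 + |ξ₁ + ξ₂ + ξ₃|)⁻¹`.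
Both gaps are differences `‖n + iy‖ - ‖m + iy‖ = (n² - m²) / (‖n + iy‖ + ‖m + iy‖)`.
The pattern `(+,-,-)` is `-Φ₊₊₊(ξ₁ + ξ₂ + ξ₃, -ξ₂, -ξ₃)`, and for `(-,-,-)` one has `Φ ≤ -4`.
-/

/-- Λ(ξ) = √(1+ξ²) -/
noncomputable def Lam (ξ : ℝ) : ℝ := Real.sqrt (1 + ξ ^ 2)

lemma Complex.sq_norm_mk (x y : ℝ) : ‖(⟨x, y⟩ : ℂ)‖ ^ 2 = x ^ 2 + y ^ 2 := by
  rw [Complex.sq_norm, Complex.normSq_mk]; ring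

lemma Complex.norm_mk_zero_left (y : ℝ) : ‖(⟨0, y⟩ : ℂ)‖ = |y| := by
  simp [Complex.norm_def, Complex.normSq_mk, Real.sqrt_mul_self_eq_abs]

lemma Complex.sub_sq_le_norm_mk_sub_norm_mk_mul {m n : ℝ} (hm : 0 ≤ m) (hmn : m ≤ n) (y : ℝ) :
    n ^ 2 - m ^ 2 ≤ (‖(⟨n, y⟩ : ℂ)‖ - ‖(⟨m, y⟩ : ℂ)‖) * (m + n + 2 * |y|) := by
  set A := ‖(⟨n, y⟩ : ℂ)‖
  set B := ‖(⟨m, y⟩ : ℂ)‖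
  have hA : A ≤ n + |y| := by
    simpa [abs_of_nonneg (hm.trans hmn)] using Complex.norm_le_abs_re_add_abs_im ⟨n, y⟩
  have hB : B ≤ m + |y| := by
    simpa [abs_of_nonneg hm] using Complex.norm_le_abs_re_add_abs_im ⟨m, y⟩
  have hBA : B ≤ A := by
    refine (pow_le_pow_iff_left₀ (norm_nonneg _) (norm_nonneg _) two_ne_zero).1 ?_
    rw [Complex.sq_norm_mk, Complex.sq_norm_mk]
    gcongr
  have hdiff : (A - B) * (A + B) = n ^ 2 - m ^ 2 := by
    linear_combination Complex.sq_norm_mk n y - Complex.sq_norm_mk m y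
  nlinarith [mul_le_mul_of_nonneg_left (add_le_add hA hB) (sub_nonneg.2 hBA)]

lemma lam_eq_norm (x : ℝ) : Lam x = ‖(⟨1, x⟩ : ℂ)‖ := by
  rw [Lam, Complex.norm_def, Complex.normSq_mk]; ring_nf

lemma lam_neg (x : ℝ) : Lam (-x) = Lam x := by
  simp [Lam]

lemma one_le_lam (x : ℝ) : 1 ≤ Lam x := by
  simpa [lam_eq_norm] using Complex.abs_re_le_norm ⟨1, x⟩

lemma abs_le_lam (x : ℝ) : |x| ≤ Lam x :=
  lam_eq_norm x ▸ Complex.abs_im_le_norm ⟨1, x⟩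

lemma one_le_lam_sub_abs_mul (x : ℝ) : 1 ≤ (Lam x - |x|) * (1 + 2 * |x|) := by
  simpa [← lam_eq_norm, Complex.norm_mk_zero_left] using
    Complex.sub_sq_le_norm_mk_sub_norm_mk_mul le_rfl zero_le_one x

lemma lam_add_le_abs_add (x y : ℝ) : Lam (x + y) ≤ |x| + Lam y := by
  have h : (⟨1, x + y⟩ : ℂ) = ⟨0, x⟩ + ⟨1, y⟩ := Complex.ext (by simp) (by simp)
  simpa [lam_eq_norm, h, Complex.norm_mk_zero_left] using norm_add_le (⟨0, x⟩ : ℂ) ⟨1, y⟩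

lemma lam_add_le (x y : ℝ) : Lam (x + y) ≤ Lam x + Lam y :=
  (lam_add_le_abs_add x y).trans (by linarith [abs_le_lam x])

/-- `Φ₊₊₊(a, b, c)`. -/
noncomputable def phase (a b c : ℝ) : ℝ := Lam a + Lam b + Lam c - Lam (a + b + c)

lemma one_le_mul_phase_of_abs_left (a b c : ℝ) : 1 ≤ 2 * (1 + |a|) * phase a b c := by
  have hsum : Lam (a + b + c) ≤ |a| + Lam b + Lam c := by
    rw [add_assoc, add_assoc]
    linarith [lam_add_le_abs_add a (b + c), lam_add_le b c]
  rw [phase]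
  nlinarith [one_le_lam_sub_abs_mul a, abs_nonneg a, abs_le_lam a]

lemma one_le_mul_phase_of_abs_sum (a b c : ℝ) : 1 ≤ 2 * (1 + |a + b + c|) * phase a b c := by
  have hsum : ‖(⟨3, a + b + c⟩ : ℂ)‖ ≤ Lam a + Lam b + Lam c := by
    have h : (⟨3, a + b + c⟩ : ℂ) = ⟨1, a⟩ + ⟨1, b⟩ + ⟨1, c⟩ :=
      Complex.ext (by simp; norm_num) (by simp)
    simpa [lam_eq_norm, h] using norm_add₃_le (a := (⟨1, a⟩ : ℂ)) (b := ⟨1, b⟩) (c := ⟨1, c⟩)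
  have hgap := Complex.sub_sq_le_norm_mk_sub_norm_mk_mul zero_le_one (by norm_num : (1 : ℝ) ≤ 3)
    (a + b + c)
  rw [← lam_eq_norm] at hgap
  have hd : 0 ≤ ‖(⟨3, a + b + c⟩ : ℂ)‖ - Lam (a + b + c) := by
    nlinarith [abs_nonneg (a + b + c)]
  rw [phase]
  nlinarith [abs_nonneg (a + b + c), mul_nonneg hd (abs_nonneg (a + b + c))]

lemma one_le_mul_phase (a b c : ℝ) :
    1 ≤ 2 * (1 + min |a + b + c| (min |a| (min |b| |c|))) * phase a b c := by
  have hba : phase b a c = phase a b c := by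
    unfold phase; rw [add_comm b a]; ring
  have hca : phase c a b = phase a b c := by
    unfold phase; rw [show c + a + b = a + b + c by ring]; ring
  have hb := hba ▸ one_le_mul_phase_of_abs_left b a c
  have hc := hca ▸ one_le_mul_phase_of_abs_left c a b
  rcases min_choice |a + b + c| (min |a| (min |b| |c|)) with h | h <;> rw [h]
  · exact one_le_mul_phase_of_abs_sum a b c
  rcases min_choice |a| (min |b| |c|) with h | h <;> rw [h]
  · exact one_le_mul_phase_of_abs_left a b c
  rcases min_choice |b| |c| with h | h <;> rw [h]
  exacts [hb, hc]

lemma inv_abs_le_of_one_le_mul {x y : ℝ} (h : 1 ≤ y * |x|) : |x|⁻¹ ≤ y := by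
  have hx : 0 < |x| := (abs_nonneg x).lt_of_ne fun h0 => by rw [← h0, mul_zero] at h; linarith
  exact (inv_le_iff_one_le_mul₀ hx).2 h

/-- Bound on the reciprocal of the cubic phase for the good sign triples
    (+,+,+), (+,-,-), (-,-,-):
    |Φ_{μ₁μ₂μ₃}(ξ₁,ξ₂,ξ₃)|⁻¹ ≤ C(1 + min{|ξ₁+ξ₂+ξ₃|, |ξ₁|, |ξ₂|, |ξ₃|}). -/
theorem three_phase_inv_bound :
    ∃ C : ℝ, 0 < C ∧ ∀ μ₁ μ₂ μ₃ : ℝ,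
      ((μ₁, μ₂, μ₃) = (1, 1, 1) ∨ (μ₁, μ₂, μ₃) = (1, -1, -1) ∨ (μ₁, μ₂, μ₃) = (-1, -1, -1)) →
      ∀ ξ₁ ξ₂ ξ₃ : ℝ,
        |(-Lam (ξ₁ + ξ₂ + ξ₃) + μ₁ * Lam ξ₁ + μ₂ * Lam ξ₂ + μ₃ * Lam ξ₃)|⁻¹ ≤
          C * (1 + min (|ξ₁ + ξ₂ + ξ₃|) (min (|ξ₁|) (min (|ξ₂|) (|ξ₃|)))) := by
  refine ⟨2, two_pos, fun μ₁ μ₂ μ₃ hμ ξ₁ ξ₂ ξ₃ => inv_abs_le_of_one_le_mul ?_⟩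
  have hm : 0 ≤ min |ξ₁ + ξ₂ + ξ₃| (min |ξ₁| (min |ξ₂| |ξ₃|)) := by positivity
  rcases hμ with h | h | h <;> obtain ⟨rfl, rfl, rfl⟩ := Prod.ext_iff.1 h
  · calc 1 ≤ _ := one_le_mul_phase ξ₁ ξ₂ ξ₃
      _ ≤ _ := by gcongr; exact le_abs.2 (Or.inl (by rw [phase]; linarith))
  · have h := one_le_mul_phase (ξ₁ + ξ₂ + ξ₃) (-ξ₂) (-ξ₃)
    have hsum : ξ₁ + ξ₂ + ξ₃ + -ξ₂ + -ξ₃ = ξ₁ := by ring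
    rw [hsum, abs_neg, abs_neg, min_left_comm] at h
    calc 1 ≤ _ := h
      _ ≤ _ := by
        gcongr
        refine le_abs.2 (Or.inr ?_)
        rw [phase, hsum, lam_neg, lam_neg]
        linarith
  · nlinarith [one_le_lam (ξ₁ + ξ₂ + ξ₃), one_le_lam ξ₁, one_le_lam ξ₂, one_le_lam ξ₃,
      neg_le_abs (-Lam (ξ₁ + ξ₂ + ξ₃) + -1 * Lam ξ₁ + -1 * Lam ξ₂ + -1 * Lam ξ₃)]
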